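/- arXiv:1907.13419 — 2 statements merged into one kernel-verified Lean document; each statement's English description precedes it below -/
import Mathlib

section
/- Let v, f : ℝ → ℝ → ℝ → ℝ and suppose there is a constant K ≥ 0 such that |f t x w₁ - f t x w₂| ≤ K·|w₁ - w₂| for all t, x, w₁, w₂, and f is continuous. Suppose w : ℝ → ℝ → ℝ is such that for every (t,x) the partial maps t' ↦ w t' x and x' ↦ w t x' are differentiable and w satisfies ∂w/∂t (t,x) + v t x (w t x) · ∂w/∂x (t,x) = f t x (w t x) everywhere, and t ↦ w t (ξ t) is continuous in t. Let ξ, ω : ℝ → ℝ be differentiable on [t₀, t₁] with ξ'(t) = v t (ξ t) (w t (ξ t)) and ω'(t) = f t (ξ t) (ω t) for all t ∈ [t₀, t₁], and suppose ω(t₀) = w t₀ (ξ t₀). Then w t (ξ t) = ω t for all t ∈ [t₀, t₁]. -/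
/-!
Along the characteristic, `t ↦ w t (ξ t)` is the diagonal of `P s u = w s (ξ u)`, whose partial
derivatives in `s` and in `u` exist separately and, by the PDE, add up to
`F t = f t (ξ t) (w t (ξ t))`. Separate differentiability gives no chain rule, but going from
`(x, x)` to `(y, y)` once through the corner `(y, x)` and once through `(x, y)` shows that
`s ↦ P s s - s • F t` has small slope between any two points close to `t` that are close to each
other relative to a gauge at *both* of them. A Baire category argument on the closed set of points
near which the slope bound fails turns this into a genuine Lipschitz bound, so the diagonal has
derivative `F`. Then `t ↦ w t (ξ t)` and `ω` solve the same ODE, Lipschitz in the unknown, with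
the same initial value, and coincide.
-/

open Set Filter Topology Metric
open scoped NNReal

section Gauge

variable {E : Type*} [PseudoMetricSpace E] {ψ : ℝ → E} {ε : ℝ≥0}

theorem LipschitzOnWith.of_dist_le_mul_of_le {s : Set ℝ}
    (h : ∀ x ∈ s, ∀ y ∈ s, x ≤ y → dist (ψ y) (ψ x) ≤ ε * (y - x)) :
    LipschitzOnWith ε ψ s := by
  refine LipschitzOnWith.of_dist_le_mul fun x hx y hy => ?_
  rcases le_total x y with hxy | hyx
  · rw [dist_comm, dist_comm x, Real.dist_eq, abs_of_nonneg (sub_nonneg.2 hxy)]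
    exact h x hx y hy hxy
  · rw [Real.dist_eq, abs_of_nonneg (sub_nonneg.2 hyx)]
    exact h y hy x hx hyx

theorem dist_le_mul_of_eventually_dist_le {p q : ℝ} (hpq : p ≤ q)
    (hψ : ContinuousOn ψ (Icc p q))
    (hloc : ∀ x ∈ Ioo p q, ∀ᶠ z in 𝓝[>] x, dist (ψ z) (ψ x) ≤ ε * (z - x)) :
    dist (ψ q) (ψ p) ≤ ε * (q - p) := by
  rcases hpq.eq_or_lt with rfl | hpq
  · simp
  -- Nothing is known at `p` itself: compare from `p' > p` on, then let `p'` tend to `p`.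
  have hstart : ∀ p' ∈ Ioc p q, dist (ψ q) (ψ p') ≤ ε * (q - p') := by
    intro p' hp'
    refine image_le_of_liminf_slope_right_le_deriv_boundary (f := fun x => dist (ψ x) (ψ p'))
      (B := fun x => ε * (x - p')) (B' := fun _ => ε)
      (continuous_dist.comp_continuousOn
        ((hψ.mono (Icc_subset_Icc hp'.1.le le_rfl)).prodMk continuousOn_const)) (by simp)
      (by fun_prop)
      (fun x _ => by simpa using ((hasDerivWithinAt_id x _).sub_const p').const_mul (ε : ℝ))
      (fun x hx r hr => ?_) (right_mem_Icc.2 hp'.2)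
    have hx' : x ∈ Ioo p q := ⟨hp'.1.trans_le hx.1, hx.2⟩
    refine Eventually.frequently ?_
    filter_upwards [hloc x hx', self_mem_nhdsWithin] with z hz hxz
    rw [slope_def_field, div_lt_iff₀ (sub_pos.2 hxz)]
    calc dist (ψ z) (ψ p') - dist (ψ x) (ψ p') ≤ dist (ψ z) (ψ x) := by
          linarith [dist_triangle (ψ z) (ψ x) (ψ p')]
      _ ≤ ε * (z - x) := hz
      _ < r * (z - x) := by gcongr; exact sub_pos.2 hxz
  have hmem : p ∈ closure (Ioc p q) := by rw [closure_Ioc hpq.ne]; exact left_mem_Icc.2 hpq.le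
  have hcont : ContinuousWithinAt ψ (Ioc p q) p :=
    (hψ p (left_mem_Icc.2 hpq.le)).mono Ioc_subset_Icc_self
  exact ContinuousWithinAt.closure_le (f := fun p' => dist (ψ q) (ψ p'))
    (g := fun p' => ε * (q - p')) hmem (tendsto_const_nhds.dist hcont)
    (by fun_prop) hstart

theorem dist_le_mul_of_mem_closure {α : Type*} [PseudoMetricSpace α] {φ : α → E}
    {s C : Set α} {ρ : ℝ} (hφ : ContinuousOn φ s) (hCs : C ⊆ s)
    (hC : ∀ c ∈ C, ∀ c' ∈ C, dist c c' < ρ → dist (φ c) (φ c') ≤ ε * dist c c')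
    {x y : α} (hx : x ∈ s) (hy : y ∈ s) (hxC : x ∈ closure C) (hyC : y ∈ closure C)
    (hxy : dist x y < ρ) : dist (φ x) (φ y) ≤ ε * dist x y := by
  set U : Set (α × α) := {p | dist p.1 p.2 < ρ}
  have hU : IsOpen U := isOpen_lt continuous_dist continuous_const
  have hmem : (x, y) ∈ closure (U ∩ C ×ˢ C) :=
    hU.inter_closure ⟨hxy, by rw [closure_prod_eq]; exact ⟨hxC, hyC⟩⟩
  have hsub : U ∩ C ×ˢ C ⊆ s ×ˢ s := fun p hp => ⟨hCs hp.2.1, hCs hp.2.2⟩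
  have hφφ : ContinuousOn (fun p : α × α => dist (φ p.1) (φ p.2)) (s ×ˢ s) :=
    continuous_dist.comp_continuousOn ((hφ.comp continuousOn_fst fun p hp => hp.1).prodMk
      (hφ.comp continuousOn_snd fun p hp => hp.2))
  exact ContinuousWithinAt.closure_le (f := fun p : α × α => dist (φ p.1) (φ p.2))
    (g := fun p => ε * dist p.1 p.2) hmem ((hφφ _ ⟨hx, hy⟩).mono hsub)
    (by fun_prop) fun p hp => hC _ hp.2.1 _ hp.2.2 hp.1

theorem IsClosed.exists_inter_ball_subset_of_subset_iUnion {α : Type*} [PseudoMetricSpace α]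
    [CompleteSpace α] {Z : Set α} (hZ : IsClosed Z) (hne : Z.Nonempty) {C : ℕ → Set α}
    (hC : ∀ n, IsClosed (C n)) (hcover : Z ⊆ ⋃ n, C n) :
    ∃ n, ∃ z ∈ Z, ∃ r > 0, Z ∩ ball z r ⊆ C n := by
  have : Nonempty Z := hne.to_subtype
  have : CompleteSpace Z := hZ.completeSpace_coe
  obtain ⟨n, z, hz⟩ := nonempty_interior_of_iUnion_of_closed
    (f := fun n => ((↑) : Z → α) ⁻¹' C n) (fun n => (hC n).preimage continuous_subtype_val)
    (by ext z; simpa using hcover z.2)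
  obtain ⟨r, hr, hball⟩ := Metric.mem_nhds_iff.1 (mem_interior_iff_mem_nhds.1 hz)
  exact ⟨n, z, z.2, r, hr, fun y ⟨hyZ, hy⟩ =>
    hball (show (⟨y, hyZ⟩ : Z) ∈ ball z r from hy)⟩

theorem dist_le_mul_of_isClosed {Z : Set ℝ} (hZ : IsClosed Z) {p q : ℝ} (hpq : p ≤ q)
    (hgap : ∀ x y, p ≤ x → x ≤ y → y ≤ q → Disjoint (Ioo x y) Z →
      dist (ψ y) (ψ x) ≤ ε * (y - x))
    (hpair : ∀ x ∈ Z ∩ Icc p q, ∀ y ∈ Z ∩ Icc p q, x ≤ y →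
      dist (ψ y) (ψ x) ≤ ε * (y - x)) :
    dist (ψ q) (ψ p) ≤ ε * (q - p) := by
  rcases (Z ∩ Icc p q).eq_empty_or_nonempty with hempty | hne
  · refine hgap p q le_rfl hpq le_rfl (disjoint_left.2 fun u hu huZ => ?_)
    exact hempty.subset ⟨huZ, Ioo_subset_Icc_self hu⟩
  have hK : IsCompact (Z ∩ Icc p q) := isCompact_Icc.inter_left hZ
  obtain ⟨x, hx, hxmin⟩ := hK.exists_isLeast hne
  obtain ⟨y, hy, hymax⟩ := hK.exists_isGreatest hne
  have hleft : dist (ψ x) (ψ p) ≤ ε * (x - p) :=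
    hgap p x le_rfl hx.2.1 hx.2.2 <| disjoint_left.2 fun u hu huZ =>
      (hxmin ⟨huZ, hu.1.le, hu.2.le.trans hx.2.2⟩).not_gt hu.2
  have hright : dist (ψ q) (ψ y) ≤ ε * (q - y) :=
    hgap y q hy.2.1 hy.2.2 le_rfl <| disjoint_left.2 fun u hu huZ =>
      (hymax ⟨huZ, hy.2.1.trans hu.1.le, hu.2.le⟩).not_gt hu.1
  calc dist (ψ q) (ψ p) ≤ dist (ψ q) (ψ y) + dist (ψ y) (ψ x) + dist (ψ x) (ψ p) :=
        dist_triangle4 _ _ _ _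
    _ ≤ ε * (q - y) + ε * (y - x) + ε * (x - p) := by
        gcongr
        exact hpair x hx y hy (hxmin hy)
    _ = ε * (q - p) := by ring

def lipschitzLocus (ε : ℝ≥0) (ψ : ℝ → E) (s : Set ℝ) : Set ℝ :=
  ⋃₀ {U | IsOpen U ∧ LipschitzOnWith ε ψ (U ∩ s)}

theorem isOpen_lipschitzLocus (s : Set ℝ) : IsOpen (lipschitzLocus ε ψ s) :=
  isOpen_sUnion fun _ hU => hU.1

theorem dist_le_mul_of_Ioo_subset_lipschitzLocus {a b x y : ℝ} (hψ : ContinuousOn ψ (Icc a b))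
    (hx : x ∈ Icc a b) (hy : y ∈ Icc a b) (hxy : x ≤ y)
    (hsub : Ioo x y ⊆ lipschitzLocus ε ψ (Icc a b)) :
    dist (ψ y) (ψ x) ≤ ε * (y - x) := by
  have hxyI : Icc x y ⊆ Icc a b := Icc_subset_Icc hx.1 hy.2
  refine dist_le_mul_of_eventually_dist_le hxy (hψ.mono hxyI) fun u hu => ?_
  obtain ⟨U, ⟨hUo, hU⟩, huU⟩ := hsub hu
  filter_upwards [nhdsWithin_le_nhds (hUo.mem_nhds huU), Ioo_mem_nhdsGT hu.2] with z hzU hz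
  have := hU.dist_le_mul z ⟨hzU, hxyI ⟨hu.1.le.trans hz.1.le, hz.2.le⟩⟩
    u ⟨huU, hxyI (Ioo_subset_Icc_self hu)⟩
  rwa [Real.dist_eq, abs_of_pos (sub_pos.2 hz.1)] at this

theorem Icc_subset_lipschitzLocus_of_gauge {a b : ℝ} (hψ : ContinuousOn ψ (Icc a b))
    {δ : ℝ → ℝ} (hδ : ∀ x ∈ Icc a b, 0 < δ x)
    (hfine : ∀ x ∈ Icc a b, ∀ y ∈ Icc a b, dist x y < δ x → dist x y < δ y →
      dist (ψ x) (ψ y) ≤ ε * dist x y) :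
    Icc a b ⊆ lipschitzLocus ε ψ (Icc a b) := by
  set I := Icc a b
  intro z₀ hz₀
  by_contra hz₀G
  -- By Baire, near some bad point `z` all bad points are limits of points with gauge
  -- `≥ 1 / (n + 1)`, which pairwise are fine; together with the gaps of the bad set this
  -- makes `ψ` `ε`-Lipschitz near `z`, a contradiction.
  have hZ : IsClosed (I \ lipschitzLocus ε ψ I) := isClosed_Icc.sdiff (isOpen_lipschitzLocus I)
  set C : ℕ → Set ℝ := fun n => {s ∈ I | 1 / (n + 1 : ℝ) ≤ δ s}
  have hcover : I \ lipschitzLocus ε ψ I ⊆ ⋃ n, closure (C n) := fun z hz => by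
    obtain ⟨n, hn⟩ := exists_nat_one_div_lt (hδ z hz.1)
    exact mem_iUnion.2 ⟨n, subset_closure ⟨hz.1, hn.le⟩⟩
  obtain ⟨n, z, hz, r, hr, hzr⟩ := hZ.exists_inter_ball_subset_of_subset_iUnion
    ⟨z₀, hz₀, hz₀G⟩ (fun n => isClosed_closure) hcover
  set ρ : ℝ := 1 / (n + 1)
  have hρ : 0 < ρ := by positivity
  refine hz.2 ⟨ball z (min r (ρ / 2)), ⟨isOpen_ball, ?_⟩, mem_ball_self (by positivity)⟩
  refine LipschitzOnWith.of_dist_le_mul_of_le fun x hx y hy hxy => ?_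
  have hxyI : Icc x y ⊆ I := Icc_subset_Icc hx.2.1 hy.2.2
  have hxyB : Icc x y ⊆ ball z (min r (ρ / 2)) := (convex_ball _ _).ordConnected.out hx.1 hy.1
  refine dist_le_mul_of_isClosed hZ hxy (fun u v hu huv hv hdisj =>
    dist_le_mul_of_Ioo_subset_lipschitzLocus hψ (hxyI ⟨hu, huv.trans hv⟩)
      (hxyI ⟨hu.trans huv, hv⟩) huv fun t ht => by_contra fun htG => disjoint_left.1 hdisj ht
        ⟨hxyI ⟨hu.trans ht.1.le, ht.2.le.trans hv⟩, htG⟩) fun u hu v hv huv => ?_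
  have hC : ∀ c ∈ C n, ∀ c' ∈ C n, dist c c' < ρ →
      dist (ψ c) (ψ c') ≤ ε * dist c c' := fun c hc c' hc' hcc' =>
    hfine c hc.1 c' hc'.1 (hcc'.trans_le hc.2) (hcc'.trans_le hc'.2)
  have hsmall : ∀ u ∈ Icc x y, u ∈ ball z r ∧ dist u z < ρ / 2 := fun u hu =>
    ⟨ball_subset_ball (min_le_left _ _) (hxyB hu),
      (mem_ball.1 (hxyB hu)).trans_le (min_le_right _ _)⟩
  have hdist : dist u v < ρ := by
    linarith [dist_triangle_right u v z, (hsmall u hu.2).2, (hsmall v hv.2).2]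
  have := dist_le_mul_of_mem_closure hψ (fun c hc => hc.1) hC (hxyI hu.2) (hxyI hv.2)
    (hzr ⟨hu.1, (hsmall u hu.2).1⟩) (hzr ⟨hv.1, (hsmall v hv.2).1⟩) hdist
  rwa [dist_comm, dist_comm u, Real.dist_eq, abs_of_nonneg (sub_nonneg.2 huv)] at this

theorem lipschitzOnWith_of_dist_le_of_gauge {a b : ℝ} (hψ : ContinuousOn ψ (Icc a b))
    {δ : ℝ → ℝ} (hδ : ∀ x ∈ Icc a b, 0 < δ x)
    (hfine : ∀ x ∈ Icc a b, ∀ y ∈ Icc a b, dist x y < δ x → dist x y < δ y →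
      dist (ψ x) (ψ y) ≤ ε * dist x y) :
    LipschitzOnWith ε ψ (Icc a b) :=
  LipschitzOnWith.of_dist_le_mul_of_le fun _ hx _ hy hxy =>
    dist_le_mul_of_Ioo_subset_lipschitzLocus hψ hx hy hxy <|
      (Ioo_subset_Icc_self.trans (Icc_subset_Icc hx.1 hy.2)).trans
        (Icc_subset_lipschitzLocus_of_gauge hψ hδ hfine)

end Gauge

section Diagonal

variable {E : Type*} [NormedAddCommGroup E] [NormedSpace ℝ E]

theorem norm_diagonal_sub_le {P : ℝ → ℝ → E} {T X : ℝ → E} {L : E} {x y c : ℝ}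
    (hTx : ‖P y x - P x x - (y - x) • T x‖ ≤ c * |y - x|)
    (hXx : ‖P x y - P x x - (y - x) • X x‖ ≤ c * |y - x|)
    (hTy : ‖P x y - P y y - (x - y) • T y‖ ≤ c * |x - y|)
    (hXy : ‖P y x - P y y - (x - y) • X y‖ ≤ c * |x - y|)
    (hx : ‖T x + X x - L‖ ≤ c) (hy : ‖T y + X y - L‖ ≤ c) :
    ‖(P y y - y • L) - (P x x - x • L)‖ ≤ 3 * c * |y - x| := by
  rw [abs_sub_comm x y] at hTy hXy
  set e₁ := P y x - P x x - (y - x) • T x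
  set e₂ := P y x - P y y - (x - y) • X y
  set e₃ := P x y - P x x - (y - x) • X x
  set e₄ := P x y - P y y - (x - y) • T y
  set u := (y - x) • (T x + X x - L)
  set u' := (y - x) • (T y + X y - L)
  have key : (2 : ℝ) • ((P y y - y • L) - (P x x - x • L)) = e₁ - e₂ + e₃ - e₄ + u + u' :=
    by module
  have h2 := congrArg norm key
  rw [norm_smul, Real.norm_two] at h2
  have hu : ‖u‖ ≤ |y - x| * c := by rw [norm_smul, Real.norm_eq_abs]; gcongr
  have hu' : ‖u'‖ ≤ |y - x| * c := by rw [norm_smul, Real.norm_eq_abs]; gcongr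
  linarith [norm_add_le (e₁ - e₂ + e₃ - e₄ + u) u', norm_add_le (e₁ - e₂ + e₃ - e₄) u,
    norm_sub_le (e₁ - e₂ + e₃) e₄, norm_add_le (e₁ - e₂) e₃, norm_sub_le e₁ e₂]

theorem HasDerivWithinAt.exists_norm_sub_le {f : ℝ → E} {f' : E} {s : Set ℝ} {x c : ℝ}
    (h : HasDerivWithinAt f f' s x) (hc : 0 < c) :
    ∃ d > 0, ∀ y ∈ s, dist y x < d → ‖f y - f x - (y - x) • f'‖ ≤ c * |y - x| := by
  obtain ⟨d, hd, hdprop⟩ :=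
    Metric.eventually_nhds_iff.1 (eventually_nhdsWithin_iff.1 (h.isLittleO.def hc))
  exact ⟨d, hd, fun y hy hyx => by simpa [Real.norm_eq_abs] using hdprop hyx hy⟩

theorem lipschitzOnWith_diagonal_sub_smul {P : ℝ → ℝ → E} {T X : ℝ → E} {L : E}
    {a b : ℝ} {ε : ℝ≥0} (hε : 0 < ε)
    (hT : ∀ s ∈ Icc a b, HasDerivWithinAt (fun u => P u s) (T s) (Icc a b) s)
    (hX : ∀ s ∈ Icc a b, HasDerivWithinAt (P s) (X s) (Icc a b) s)
    (hP : ContinuousOn (fun s => P s s) (Icc a b))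
    (hL : ∀ s ∈ Icc a b, ‖T s + X s - L‖ ≤ ε) :
    LipschitzOnWith (3 * ε) (fun s => P s s - s • L) (Icc a b) := by
  have hgauge : ∀ x ∈ Icc a b, ∃ d > 0, ∀ y ∈ Icc a b, dist y x < d →
      ‖P y x - P x x - (y - x) • T x‖ ≤ ε * |y - x| ∧
      ‖P x y - P x x - (y - x) • X x‖ ≤ ε * |y - x| := by
    intro x hx
    obtain ⟨d₁, hd₁, hT'⟩ := (hT x hx).exists_norm_sub_le hε
    obtain ⟨d₂, hd₂, hX'⟩ := (hX x hx).exists_norm_sub_le hε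
    exact ⟨min d₁ d₂, lt_min hd₁ hd₂, fun y hy hyx =>
      ⟨hT' y hy (hyx.trans_le (min_le_left _ _)), hX' y hy (hyx.trans_le (min_le_right _ _))⟩⟩
  choose! d hd hdprop using hgauge
  refine lipschitzOnWith_of_dist_le_of_gauge (hP.sub (continuousOn_id.smul continuousOn_const)) hd
    fun x hx y hy hxy hyx => ?_
  have hx' := hdprop x hx y hy (by rwa [dist_comm])
  have hy' := hdprop y hy x hx hyx
  rw [dist_comm, dist_eq_norm, dist_comm, Real.dist_eq, NNReal.coe_mul, NNReal.coe_ofNat]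
  exact norm_diagonal_sub_le hx'.1 hx'.2 hy'.1 hy'.2 (hL x hx) (hL y hy)

theorem hasDerivWithinAt_diagonal {P : ℝ → ℝ → E} {T X : ℝ → E} {a b s₀ : ℝ}
    (hT : ∀ s ∈ Icc a b, HasDerivWithinAt (fun u => P u s) (T s) (Icc a b) s)
    (hX : ∀ s ∈ Icc a b, HasDerivWithinAt (P s) (X s) (Icc a b) s)
    (hP : ContinuousOn (fun s => P s s) (Icc a b))
    (hTX : ContinuousWithinAt (fun s => T s + X s) (Icc a b) s₀) (hs₀ : s₀ ∈ Icc a b) :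
    HasDerivWithinAt (fun s => P s s) (T s₀ + X s₀) (Icc a b) s₀ := by
  rw [hasDerivWithinAt_iff_isLittleO, Asymptotics.isLittleO_iff]
  intro c hc
  set I := Icc a b
  set L := T s₀ + X s₀
  obtain ⟨η, hη, hηL⟩ := Metric.continuousWithinAt_iff.1 hTX (c / 3) (by positivity)
  set J := Icc (max a (s₀ - η / 2)) (min b (s₀ + η / 2))
  have hJI : J ⊆ I := Icc_subset_Icc (le_max_left _ _) (min_le_left _ _)
  have hJ : ∀ x ∈ I, dist x s₀ < η / 2 → x ∈ J := fun x hx hxs₀ => by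
    rw [Real.dist_eq, abs_lt] at hxs₀
    exact ⟨max_le hx.1 (by linarith), le_min hx.2 (by linarith)⟩
  have hL : ∀ x ∈ J, ‖T x + X x - L‖ ≤ (c / 3).toNNReal := fun x hx => by
    rw [Real.coe_toNNReal _ (by positivity), ← dist_eq_norm]
    refine (hηL (hJI hx) ?_).le
    rw [Real.dist_eq, abs_lt]
    constructor <;>
      linarith [le_max_right a (s₀ - η / 2), min_le_right b (s₀ + η / 2), hx.1, hx.2]
  have hlip := lipschitzOnWith_diagonal_sub_smul (by simpa using hc)
    (fun s hs => (hT s (hJI hs)).mono hJI) (fun s hs => (hX s (hJI hs)).mono hJI) (hP.mono hJI) hL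
  filter_upwards [inter_mem_nhdsWithin I (ball_mem_nhds s₀ (half_pos hη))] with x hx
  have := hlip.dist_le_mul x (hJ x hx.1 hx.2) s₀ (hJ s₀ hs₀ (by simpa using half_pos hη))
  rw [dist_eq_norm, Real.dist_eq, NNReal.coe_mul, NNReal.coe_ofNat,
    Real.coe_toNNReal _ (by positivity), mul_div_cancel₀ c three_ne_zero] at this
  have hsplit : P x x - P s₀ s₀ - (x - s₀) • L = P x x - x • L - (P s₀ s₀ - s₀ • L) := by module
  rwa [Real.norm_eq_abs, hsplit]

end Diagonal

theorem method_of_characteristics_representation_general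
    (v f : ℝ → ℝ → ℝ → ℝ) (K : ℝ) (hK : 0 ≤ K)
    (hlip : ∀ t x w₁ w₂ : ℝ, |f t x w₁ - f t x w₂| ≤ K * |w₁ - w₂|)
    (hfc : Continuous fun p : ℝ × ℝ × ℝ => f p.1 p.2.1 p.2.2)
    (w : ℝ → ℝ → ℝ)
    (hwt : ∀ t x : ℝ, DifferentiableAt ℝ (fun t' => w t' x) t)
    (hwx : ∀ t x : ℝ, DifferentiableAt ℝ (fun x' => w t x') x)
    (hpde : ∀ t x : ℝ,
      deriv (fun t' => w t' x) t + v t x (w t x) * deriv (fun x' => w t x') x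
        = f t x (w t x))
    (t₀ t₁ : ℝ) (ξ ω : ℝ → ℝ)
    (hwξc : Continuous fun t => w t (ξ t))
    (hξ : ∀ t ∈ Set.Icc t₀ t₁,
      HasDerivWithinAt ξ (v t (ξ t) (w t (ξ t))) (Set.Icc t₀ t₁) t)
    (hω : ∀ t ∈ Set.Icc t₀ t₁,
      HasDerivWithinAt ω (f t (ξ t) (ω t)) (Set.Icc t₀ t₁) t)
    (hinit : ω t₀ = w t₀ (ξ t₀)) :
    ∀ t ∈ Set.Icc t₀ t₁, w t (ξ t) = ω t := by
  have hξc : ContinuousOn ξ (Icc t₀ t₁) := fun t ht => (hξ t ht).continuousWithinAt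
  have hF : ContinuousOn (fun t => f t (ξ t) (w t (ξ t))) (Icc t₀ t₁) :=
    hfc.comp_continuousOn (continuousOn_id.prodMk (hξc.prodMk hwξc.continuousOn))
  have hsum : ∀ t, deriv (fun t' => w t' (ξ t)) t +
      deriv (fun x' => w t x') (ξ t) * v t (ξ t) (w t (ξ t)) = f t (ξ t) (w t (ξ t)) :=
    fun t => by rw [mul_comm]; exact hpde t (ξ t)
  have hg : ∀ t ∈ Icc t₀ t₁,
      HasDerivWithinAt (fun t => w t (ξ t)) (f t (ξ t) (w t (ξ t))) (Icc t₀ t₁) t := by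
    intro t ht
    rw [← hsum]
    refine hasDerivWithinAt_diagonal (P := fun s u => w s (ξ u))
      (fun s _ => (hwt s (ξ s)).hasDerivAt.hasDerivWithinAt)
      (fun s hs => (hwx s (ξ s)).hasDerivAt.comp_hasDerivWithinAt s (hξ s hs))
      hwξc.continuousOn ?_ ht
    simpa only [hsum] using hF t ht
  have hIci : ∀ {φ φ' : ℝ → ℝ},
      (∀ t ∈ Icc t₀ t₁, HasDerivWithinAt φ (φ' t) (Icc t₀ t₁) t) →
      ∀ t ∈ Ico t₀ t₁, HasDerivWithinAt φ (φ' t) (Ici t) t := fun h t ht =>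
    (h t (Ico_subset_Icc_self ht)).mono_of_mem_nhdsWithin (Icc_mem_nhdsGE_of_mem ht)
  exact ODE_solution_unique (v := fun t y => f t (ξ t) y) (K := ⟨K, hK⟩)
    (fun t => LipschitzWith.of_dist_le_mul fun y₁ y₂ => hlip t (ξ t) y₁ y₂)
    hwξc.continuousOn (hIci hg) (fun t ht => (hω t ht).continuousWithinAt) (hIci hω) hinit.symm

/-- Representation formula of the method of characteristics: the solution of the
quasilinear PDE `w_t + v(t,x,w) w_x = f(t,x,w)` coincides along a characteristic
curve `ξ` with the solution `ω` of the characteristic ODE `ω' = f(t, ξ, ω)`,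
provided the initial value of `ω` matches the PDE solution and `f` is Lipschitz
in its last argument. -/
theorem method_of_characteristics_representation
    (v f : ℝ → ℝ → ℝ → ℝ) (K : ℝ) (hK : 0 ≤ K)
    (hlip : ∀ t x w₁ w₂ : ℝ, |f t x w₁ - f t x w₂| ≤ K * |w₁ - w₂|)
    (hfc : Continuous fun p : ℝ × ℝ × ℝ => f p.1 p.2.1 p.2.2)
    (w : ℝ → ℝ → ℝ)
    (hwt : ∀ t x : ℝ, DifferentiableAt ℝ (fun t' => w t' x) t)
    (hwx : ∀ t x : ℝ, DifferentiableAt ℝ (fun x' => w t x') x)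
    (hpde : ∀ t x : ℝ,
      deriv (fun t' => w t' x) t + v t x (w t x) * deriv (fun x' => w t x') x
        = f t x (w t x))
    (t₀ t₁ : ℝ) (ht : t₀ ≤ t₁) (ξ ω : ℝ → ℝ)
    (hwξc : Continuous fun t => w t (ξ t))
    (hξ : ∀ t ∈ Set.Icc t₀ t₁,
      HasDerivWithinAt ξ (v t (ξ t) (w t (ξ t))) (Set.Icc t₀ t₁) t)
    (hω : ∀ t ∈ Set.Icc t₀ t₁,
      HasDerivWithinAt ω (f t (ξ t) (ω t)) (Set.Icc t₀ t₁) t)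
    (hinit : ω t₀ = w t₀ (ξ t₀)) :
    ∀ t ∈ Set.Icc t₀ t₁, w t (ξ t) = ω t :=
  method_of_characteristics_representation_general v f K hK hlip hfc w hwt hwx hpde t₀ t₁ ξ ω hwξc
    hξ hω hinit
end

section
/- Let γ ∈ ℝ, γ ≠ 0, define s : ℝ → ℝ by s t = (exp(γ·t) - 1)/γ and w : ℝ → ℝ → ℝ by w t x = exp(γ·t) · (if Int.fract (x - s t) ≥ 1/2 then 1 else 0). Let (t₀, x₀) ∈ ℝ² be such that Int.fract (x₀ - s t₀) ≠ 0 and Int.fract (x₀ - s t₀) ≠ 1/2. Then the map t ↦ w t x₀ is differentiable at t₀ with derivative d₁, the map x ↦ w t₀ x is differentiable at x₀ with derivative d₂, and d₁ + exp(γ·t₀) · d₂ = γ · w t₀ x₀. -/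
/-- The exact solution of the full-state feedback example,
`w(t,x) = e^{γt}·𝟙(fract(x - s(t)) ≥ 1/2)` with shift `s(t) = (e^{γt} - 1)/γ`,
satisfies the transport PDE `w_t + e^{γt} w_x = γ w` at every point where the
underlying square wave is locally constant. -/
theorem exact_solution_satisfies_pde (γ : ℝ) (hγ : γ ≠ 0)
    (s : ℝ → ℝ) (hs : ∀ t, s t = (Real.exp (γ * t) - 1) / γ)
    (w : ℝ → ℝ → ℝ)
    (hw : ∀ t x, w t x =
      Real.exp (γ * t) * (if Int.fract (x - s t) ≥ 1 / 2 then 1 else 0))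
    (t₀ x₀ : ℝ)
    (h0 : Int.fract (x₀ - s t₀) ≠ 0)
    (hhalf : Int.fract (x₀ - s t₀) ≠ 1 / 2) :
    ∃ d₁ d₂ : ℝ,
      HasDerivAt (fun t => w t x₀) d₁ t₀ ∧
      HasDerivAt (fun x => w t₀ x) d₂ x₀ ∧
      d₁ + Real.exp (γ * t₀) * d₂ = γ * w t₀ x₀ := by
  set b : ℝ := if Int.fract (x₀ - s t₀) ≥ 1 / 2 then 1 else 0 with hb
  -- continuity of fract at the point
  have hne : (x₀ - s t₀) ≠ (⌊x₀ - s t₀⌋ : ℝ) := by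
    intro h
    exact h0 (by rw [Int.fract, h]; simp)
  have hfc : ContinuousAt Int.fract (x₀ - s t₀) := continuousAt_fract hne
  have hscont : Continuous s := by
    have : s = fun t => (Real.exp (γ * t) - 1) / γ := funext hs
    rw [this]; fun_prop
  -- eventually in t, the indicator equals b
  have hind : ∀ᶠ y in nhds (x₀ - s t₀),
      (if Int.fract y ≥ 1 / 2 then (1:ℝ) else 0) = b := by
    rcases lt_or_gt_of_ne hhalf with hlt | hgt
    · have : ∀ᶠ y in nhds (x₀ - s t₀), Int.fract y < 1 / 2 :=
        hfc.eventually_lt continuousAt_const hlt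
      filter_upwards [this] with y hy
      rw [hb, if_neg (not_le.mpr hy), if_neg (not_le.mpr hlt)]
    · have : ∀ᶠ y in nhds (x₀ - s t₀), Int.fract y > 1 / 2 :=
        (continuousAt_const (y := (1/2:ℝ))).eventually_lt hfc hgt
      filter_upwards [this] with y hy
      rw [hb, if_pos hy.le, if_pos hgt.le]
  have hct : ContinuousAt (fun t => x₀ - s t) t₀ :=
    (continuous_const.sub hscont).continuousAt
  have hevt : ∀ᶠ t in nhds t₀, w t x₀ = Real.exp (γ * t) * b := by
    filter_upwards [hct.eventually hind] with t ht
    rw [hw]; rw [ht]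
  have hcx : ContinuousAt (fun x => x - s t₀) x₀ :=
    (continuous_id.sub continuous_const).continuousAt
  have hevx : ∀ᶠ x in nhds x₀, w t₀ x = Real.exp (γ * t₀) * b := by
    filter_upwards [hcx.eventually hind] with x hx
    rw [hw]; rw [hx]
  refine ⟨γ * Real.exp (γ * t₀) * b, 0, ?_, ?_, ?_⟩
  · have h1 : HasDerivAt (fun t => Real.exp (γ * t) * b)
        (γ * Real.exp (γ * t₀) * b) t₀ := by
      have := ((hasDerivAt_id t₀).const_mul γ).exp.mul_const b
      simpa [mul_comm, mul_assoc, mul_left_comm] using this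
    exact h1.congr_of_eventuallyEq hevt
  · have h2 : HasDerivAt (fun _ : ℝ => Real.exp (γ * t₀) * b) 0 x₀ :=
      hasDerivAt_const _ _
    exact h2.congr_of_eventuallyEq hevx
  · rw [hw]; ring
end
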